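/- Let Ω ⊂ ℝ^N be bounded, 1 < p < ∞, and let (u_k) be a sequence in W₀^{1,p}(Ω) with u_k ⇀ u weakly in W₀^{1,p}(Ω) and limsup_k ⟨-Δ_p u_k, u_k - u⟩ ≤ 0, where ⟨-Δ_p w, φ⟩ = ∫_Ω |∇w|^{p-2}∇w·∇φ dx. Then u_k → u strongly in W₀^{1,p}(Ω). -/

import Mathlib

open MeasureTheory Filter

variable {N : ℕ}

/-- `g` is a weak gradient of `u` on `Ω`. -/
def HasWeakGradient (Ω : Set (EuclideanSpace ℝ (Fin N)))
    (u : EuclideanSpace ℝ (Fin N) → ℝ) (g : EuclideanSpace ℝ (Fin N) → EuclideanSpace ℝ (Fin N)) :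
    Prop :=
  ∀ φ : EuclideanSpace ℝ (Fin N) → ℝ, ContDiff ℝ (⊤ : ℕ∞) φ → HasCompactSupport φ →
    tsupport φ ⊆ Ω →
    ∫ x in Ω, u x • gradient φ x = -∫ x in Ω, φ x • g x

/-- `u ∈ W₀^{1,p}(Ω)` with weak gradient `g`: `u, g ∈ L^p(Ω)`, `g` is a weak gradient of `u`,
and `(u, g)` is approximated in the `W^{1,p}` norm by smooth test functions supported in `Ω`. -/
def MemW01p (p : ℝ) (Ω : Set (EuclideanSpace ℝ (Fin N)))
    (u : EuclideanSpace ℝ (Fin N) → ℝ) (g : EuclideanSpace ℝ (Fin N) → EuclideanSpace ℝ (Fin N)) :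
    Prop :=
  MemLp u (ENNReal.ofReal p) (volume.restrict Ω) ∧
  MemLp g (ENNReal.ofReal p) (volume.restrict Ω) ∧
  HasWeakGradient Ω u g ∧
  ∀ ε : ℝ, 0 < ε → ∃ φ : EuclideanSpace ℝ (Fin N) → ℝ,
    ContDiff ℝ (⊤ : ℕ∞) φ ∧ HasCompactSupport φ ∧ tsupport φ ⊆ Ω ∧
    eLpNorm (fun x => u x - φ x) (ENNReal.ofReal p) (volume.restrict Ω) +
      eLpNorm (fun x => g x - gradient φ x) (ENNReal.ofReal p) (volume.restrict Ω) <
      ENNReal.ofReal ε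


set_option maxHeartbeats 1000000
open scoped ENNReal NNReal

section Pointwise

variable {p : ℝ}

/-- helper: `s^(p-2) * (s*s) = s^p` for `s ≥ 0`, `1 < p`. -/
lemma rpow_helper4 (hp : 1 < p) {s : ℝ} (hs : 0 ≤ s) : s ^ (p - 2) * (s * s) = s ^ p := by
  rcases eq_or_lt_of_le hs with h | h
  · rw [← h, mul_zero, mul_zero, Real.zero_rpow (by linarith)]
  · have h1 : s * s = s ^ (1:ℝ) * s ^ (1:ℝ) := by rw [Real.rpow_one]
    rw [h1, ← Real.rpow_add h, ← Real.rpow_add h]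
    ring_nf

/-- helper: `s^(p-2) * s = s^(p-1)` for `s ≥ 0`, `1 < p`. -/
lemma rpow_helper3 (hp : 1 < p) {s : ℝ} (hs : 0 ≤ s) : s ^ (p - 2) * s = s ^ (p - 1) := by
  rcases eq_or_lt_of_le hs with h | h
  · rw [← h, mul_zero, Real.zero_rpow (by linarith)]
  · nth_rewrite 2 [← Real.rpow_one s]
    rw [← Real.rpow_add h]; ring_nf

/-- helper: `s^(p-1) * s = s^p` for `s ≥ 0`, `1 < p`. -/
lemma rpow_helper2 (hp : 1 < p) {s : ℝ} (hs : 0 ≤ s) : s ^ (p - 1) * s = s ^ p := by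
  rcases eq_or_lt_of_le hs with h | h
  · rw [← h, mul_zero, Real.zero_rpow (by linarith)]
  · nth_rewrite 2 [← Real.rpow_one s]
    rw [← Real.rpow_add h]; ring_nf

/-- The scalar core of the `p ≥ 2` monotonicity inequality. -/
lemma scalar_ge_two (hp : 2 ≤ p) {s t c d : ℝ} (hs : 0 ≤ s) (ht : 0 ≤ t) (hd : 0 ≤ d)
    (hd2 : d * d = s * s - 2 * c + t * t) (hdle : d ≤ s + t) :
    (2:ℝ) ^ (1 - p) * d ^ p ≤ s ^ p + t ^ p - (s ^ (p-2) + t ^ (p-2)) * c := by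
  have hp1 : (1:ℝ) < p := by linarith
  have step1 : (1/2) * (s ^ (p-2) + t ^ (p-2)) * (d * d) ≤
      s ^ p + t ^ p - (s ^ (p-2) + t ^ (p-2)) * c := by
    have mono : 0 ≤ (s ^ (p-2) - t ^ (p-2)) * (s * s - t * t) := by
      rcases le_total t s with h | h
      · have := Real.rpow_le_rpow ht h (by linarith : (0:ℝ) ≤ p - 2)
        exact mul_nonneg (by linarith) (by nlinarith)
      · have := Real.rpow_le_rpow hs h (by linarith : (0:ℝ) ≤ p - 2)
        have e : (s ^ (p-2) - t ^ (p-2)) * (s * s - t * t)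
            = (t ^ (p-2) - s ^ (p-2)) * (t * t - s * s) := by ring
        rw [e]; exact mul_nonneg (by linarith) (by nlinarith)
    have e3 := rpow_helper4 hp1 hs
    have e4 := rpow_helper4 hp1 ht
    rw [hd2]
    nlinarith [mono]
  have step2 : (2:ℝ) ^ (1 - p) * d ^ (p - 2) ≤ (1/2) * (s ^ (p-2) + t ^ (p-2)) := by
    have h1 : d ^ (p-2) ≤ (s + t) ^ (p-2) :=
      Real.rpow_le_rpow hd hdle (by linarith)
    have h2 : (s + t) ^ (p-2) ≤ (2 * max s t) ^ (p-2) := by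
      apply Real.rpow_le_rpow (by linarith) _ (by linarith)
      rcases le_total s t with h | h
      · rw [max_eq_right h]; linarith
      · rw [max_eq_left h]; linarith
    have h3 : (2 * max s t) ^ (p-2) = 2 ^ (p-2) * (max s t) ^ (p-2) :=
      Real.mul_rpow (by norm_num) (le_max_of_le_left hs)
    have h4 : (max s t) ^ (p-2) ≤ s ^ (p-2) + t ^ (p-2) := by
      rcases le_total s t with h | h
      · rw [max_eq_right h]
        have : (0:ℝ) ≤ s ^ (p-2) := Real.rpow_nonneg hs _
        linarith
      · rw [max_eq_left h]
        have : (0:ℝ) ≤ t ^ (p-2) := Real.rpow_nonneg ht _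
        linarith
    have h6 : (2:ℝ) ^ (1 - p) * (2:ℝ) ^ (p - 2) = 1/2 := by
      rw [← Real.rpow_add (by norm_num : (0:ℝ) < 2),
        show (1:ℝ) - p + (p - 2) = -1 by ring, Real.rpow_neg_one]
      norm_num
    calc (2:ℝ) ^ (1 - p) * d ^ (p - 2)
        ≤ (2:ℝ) ^ (1 - p) * (2 ^ (p-2) * (s ^ (p-2) + t ^ (p-2))) := by
          apply mul_le_mul_of_nonneg_left _ (Real.rpow_nonneg (by norm_num) _)
          calc d ^ (p-2) ≤ (2 * max s t) ^ (p-2) := le_trans h1 h2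
            _ = 2 ^ (p-2) * (max s t) ^ (p-2) := h3
            _ ≤ 2 ^ (p-2) * (s ^ (p-2) + t ^ (p-2)) :=
                mul_le_mul_of_nonneg_left h4 (Real.rpow_nonneg (by norm_num) _)
      _ = (1/2) * (s ^ (p-2) + t ^ (p-2)) := by rw [← mul_assoc, h6]
  have e : d ^ (p-2) * (d * d) = d ^ p := rpow_helper4 hp1 hd
  calc (2:ℝ) ^ (1 - p) * d ^ p = ((2:ℝ) ^ (1 - p) * d ^ (p-2)) * (d * d) := by
        rw [mul_assoc, e]
    _ ≤ ((1/2) * (s ^ (p-2) + t ^ (p-2))) * (d * d) := by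
        apply mul_le_mul_of_nonneg_right step2 (mul_nonneg hd hd)
    _ ≤ _ := step1

/-- Tangent line inequality for concave rpow. -/
lemma tangent_rpow (hp1 : 1 < p) (hp2 : p ≤ 2) {s t : ℝ} (ht : 0 ≤ t) (hts : t ≤ s)
    (hs : 0 < s) : (p - 1) * s ^ (p-2) * (s - t) ≤ s ^ (p-1) - t ^ (p-1) := by
  have hα1 : (0:ℝ) ≤ p - 1 := by linarith
  have hα2 : (0:ℝ) ≤ 2 - p := by linarith
  have hx0 : 0 ≤ t / s := div_nonneg ht hs.le
  have key : (t/s) ^ (p-1) * (1:ℝ) ^ (2-p) ≤ (p-1) * (t/s) + (2-p) * 1 :=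
    Real.geom_mean_le_arith_mean2_weighted hα1 hα2 hx0 zero_le_one (by ring)
  rw [Real.one_rpow, mul_one, mul_one] at key
  have hspow : (0:ℝ) < s ^ (p-1) := Real.rpow_pos_of_pos hs _
  have hts' : (t/s) ^ (p-1) = t ^ (p-1) / s ^ (p-1) := Real.div_rpow ht hs.le _
  have key2 : t ^ (p-1) ≤ ((p-1) * (t/s) + (2-p)) * s ^ (p-1) := by
    rw [hts'] at key
    calc t ^ (p-1) = t ^ (p-1) / s ^ (p-1) * s ^ (p-1) := by field_simp
      _ ≤ ((p-1) * (t/s) + (2-p)) * s ^ (p-1) :=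
          mul_le_mul_of_nonneg_right key hspow.le
  have e3 := rpow_helper3 hp1 hs.le
  have e : (t / s) * s ^ (p-1) = t * s ^ (p-2) := by
    rw [div_mul_eq_mul_div, ← e3]
    field_simp
  have key3 : t ^ (p-1) ≤ (p-1) * (t * s ^ (p-2)) + (2-p) * (s ^ (p-2) * s) := by
    calc t ^ (p-1) ≤ ((p-1) * (t/s) + (2-p)) * s ^ (p-1) := key2
      _ = (p-1) * ((t/s) * s ^ (p-1)) + (2-p) * s ^ (p-1) := by ring
      _ = (p-1) * (t * s ^ (p-2)) + (2-p) * (s ^ (p-2) * s) := by rw [e, e3]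
  have hgoal : (p-1) * s ^ (p-2) * (s - t)
      = s ^ (p-2) * s - ((p-1) * (t * s ^ (p-2)) + (2-p) * (s ^ (p-2) * s)) := by ring
  rw [hgoal, ← e3]
  linarith [key3]

/-- The scalar core of the `1 < p < 2` monotonicity inequality. -/
lemma scalar_lt_two_aux (hp1 : 1 < p) (hp2 : p < 2) {s t c d : ℝ} (ht : 0 ≤ t) (hts : t ≤ s)
    (hd : 0 ≤ d) (hd2 : d * d = s*s - 2*c + t*t) (hcu : c ≤ s*t) (hcl : -(s*t) ≤ c) :
    (p-1) * (d*d) * (s+t) ^ (p-2) ≤ s ^ p + t ^ p - (s ^ (p-2) + t ^ (p-2)) * c := by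
  rcases eq_or_lt_of_le ht with h0 | htpos
  · -- t = 0
    have hc0 : c = 0 := le_antisymm (by rw [← h0, mul_zero] at hcu; exact hcu)
      (by rw [← h0, mul_zero, neg_zero] at hcl; exact hcl)
    have hs : 0 ≤ s := le_trans ht hts
    rw [← h0, hc0]
    have h1 : (0:ℝ) ^ p = 0 := Real.zero_rpow (by linarith)
    have h2 : d * d = s * s := by rw [← h0] at hd2; linarith [hd2]
    rw [h1, h2, add_zero, mul_zero, sub_zero]
    have e4 := rpow_helper4 hp1 hs
    have : (p-1) * (s*s) * s ^ (p-2) = (p-1) * s ^ p := by linear_combination (p-1) * e4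
    rw [this]
    have hsp : 0 ≤ s ^ p := Real.rpow_nonneg hs _
    nlinarith [hsp]
  · -- t > 0
    have hs : (0:ℝ) < s := lt_of_lt_of_le htpos hts
    have hstpos : (0:ℝ) < s + t := by linarith
    have hr0 : 0 ≤ 2*s*t - 2*c := by linarith
    set r : ℝ := 2*s*t - 2*c with hr
    have hdd : d*d = (s-t)*(s-t) + r := by rw [hr]; linarith [hd2]
    have A1 : (s+t) ^ (p-2) ≤ s ^ (p-2) :=
      Real.rpow_le_rpow_of_nonpos hs (by linarith) (by linarith)
    have A2 : (s+t) ^ (p-2) ≤ t ^ (p-2) :=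
      Real.rpow_le_rpow_of_nonpos htpos (by linarith) (by linarith)
    have htan := tangent_rpow hp1 hp2.le ht hts hs
    have e3x := rpow_helper3 hp1 hs.le
    have e3y := rpow_helper3 hp1 ht
    have e4x := rpow_helper4 hp1 hs.le
    have e4y := rpow_helper4 hp1 ht
    have identity : 2*(s ^ p + t ^ p - (s ^ (p-2) + t ^ (p-2))*c)
        = s ^ (p-2) * r + t ^ (p-2) * r + 2*(s-t)*(s ^ (p-1) - t ^ (p-1)) := by
      rw [hr]
      linear_combination -2*e4x - 2*e4y + (2*s - 2*t)*e3x + (2*t - 2*s)*e3y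
    have hCst : 0 ≤ (s+t) ^ (p-2) := Real.rpow_nonneg hstpos.le _
    have hst2 : 0 ≤ (s-t)*(s-t) := mul_self_nonneg _
    have b3' : 2*(p-1)*((s-t)*(s-t))*((s+t) ^ (p-2)) ≤ 2*(s-t)*(s ^ (p-1) - t ^ (p-1)) := by
      calc 2*(p-1)*((s-t)*(s-t))*((s+t) ^ (p-2))
          ≤ 2*(p-1)*((s-t)*(s-t))*(s ^ (p-2)) := by
            apply mul_le_mul_of_nonneg_left A1
            have : (0:ℝ) ≤ p - 1 := by linarith
            positivity
        _ = 2*(s-t)*((p-1) * s ^ (p-2) * (s - t)) := by ring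
        _ ≤ 2*(s-t)*(s ^ (p-1) - t ^ (p-1)) := by
            apply mul_le_mul_of_nonneg_left htan
            linarith
    have b1 : r * ((s+t) ^ (p-2)) ≤ r * (s ^ (p-2)) := mul_le_mul_of_nonneg_left A1 hr0
    have b2 : r * ((s+t) ^ (p-2)) ≤ r * (t ^ (p-2)) := mul_le_mul_of_nonneg_left A2 hr0
    have b12 : 2*(p-1)*r*((s+t) ^ (p-2)) ≤ s ^ (p-2) * r + t ^ (p-2) * r := by
      have h2p : 2*(p-1) ≤ 2 := by linarith
      have hrC : 0 ≤ r * ((s+t) ^ (p-2)) := mul_nonneg hr0 hCst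
      nlinarith [b1, b2, hrC]
    have expand : 2*((p-1) * (d*d) * ((s+t) ^ (p-2)))
        = 2*(p-1)*((s-t)*(s-t))*((s+t) ^ (p-2)) + 2*(p-1)*r*((s+t) ^ (p-2)) := by
      rw [hdd]; ring
    linarith [b3', b12, identity, expand]

variable {F : Type*} [NormedAddCommGroup F] [InnerProductSpace ℝ F]

/-- The basic algebraic expansion of the monotonicity quantity. -/
lemma plap_expand (hp : 1 < p) (a b : F) :
    ‖a‖ ^ (p - 2) * (inner ℝ a (a - b) : ℝ) - ‖b‖ ^ (p - 2) * (inner ℝ b (a - b) : ℝ)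
      = ‖a‖ ^ p + ‖b‖ ^ p - (‖a‖ ^ (p-2) + ‖b‖ ^ (p-2)) * (inner ℝ a b : ℝ) := by
  have ha : (inner ℝ a a : ℝ) = ‖a‖ * ‖a‖ := real_inner_self_eq_norm_mul_norm a
  have hb : (inner ℝ b b : ℝ) = ‖b‖ * ‖b‖ := real_inner_self_eq_norm_mul_norm b
  have h1 : (inner ℝ a (a - b) : ℝ) = (inner ℝ a a : ℝ) - (inner ℝ a b : ℝ) := inner_sub_right a a b
  have h2 : (inner ℝ b (a - b) : ℝ) = (inner ℝ a b : ℝ) - (inner ℝ b b : ℝ) := by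
    rw [inner_sub_right, real_inner_comm b a]
  rw [h1, h2, ha, hb, ← rpow_helper4 hp (norm_nonneg a), ← rpow_helper4 hp (norm_nonneg b)]
  ring

lemma norm_sub_self_inner (a b : F) :
    ‖a - b‖ * ‖a - b‖ = ‖a‖ * ‖a‖ - 2 * (inner ℝ a b : ℝ) + ‖b‖ * ‖b‖ := by
  have h := @norm_sub_sq_real F _ _ a b
  simp only [pow_two] at h
  linarith [h]

/-- Nonnegativity of the monotonicity quantity. -/
lemma plap_nonneg (hp : 1 < p) (a b : F) :
    0 ≤ ‖a‖ ^ (p - 2) * (inner ℝ a (a - b) : ℝ) - ‖b‖ ^ (p - 2) * (inner ℝ b (a - b) : ℝ) := by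
  rw [plap_expand hp a b]
  have hs : (0:ℝ) ≤ ‖a‖ := norm_nonneg a
  have ht : (0:ℝ) ≤ ‖b‖ := norm_nonneg b
  have hab : (inner ℝ a b : ℝ) ≤ ‖a‖ * ‖b‖ := real_inner_le_norm a b
  have h1 : (‖a‖ ^ (p-2) + ‖b‖ ^ (p-2)) * (inner ℝ a b : ℝ)
      ≤ (‖a‖ ^ (p-2) + ‖b‖ ^ (p-2)) * (‖a‖ * ‖b‖) := by
    apply mul_le_mul_of_nonneg_left hab
    positivity
  have key : (‖a‖ ^ (p-2) + ‖b‖ ^ (p-2)) * (‖a‖ * ‖b‖) ≤ ‖a‖ ^ p + ‖b‖ ^ p := by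
    set s := ‖a‖; set t := ‖b‖
    have e1 : s ^ (p-2) * (s * t) = s ^ (p-1) * t := by
      rw [← mul_assoc, rpow_helper3 hp hs]
    have e2 : t ^ (p-2) * (s * t) = t ^ (p-1) * s := by
      rw [mul_comm s t, ← mul_assoc, rpow_helper3 hp ht]
    have mono : 0 ≤ (s ^ (p-1) - t ^ (p-1)) * (s - t) := by
      rcases le_total t s with h | h
      · apply mul_nonneg _ (by linarith)
        have := Real.rpow_le_rpow ht h (by linarith : (0:ℝ) ≤ p - 1)
        linarith
      · have h2 := Real.rpow_le_rpow hs h (by linarith : (0:ℝ) ≤ p - 1)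
        have e : (s ^ (p-1) - t ^ (p-1)) * (s - t) = (t ^ (p-1) - s ^ (p-1)) * (t - s) := by ring
        rw [e]
        exact mul_nonneg (by linarith) (by linarith)
    have e3 : s ^ (p-1) * s = s ^ p := rpow_helper2 hp hs
    have e4 : t ^ (p-1) * t = t ^ p := rpow_helper2 hp ht
    nlinarith [mono]
  linarith

/-- The key pointwise inequality for `p ≥ 2`. -/
lemma plap_key_ge_two (hp : 2 ≤ p) (a b : F) :
    (2:ℝ) ^ (1 - p) * ‖a - b‖ ^ p ≤
      ‖a‖ ^ (p - 2) * (inner ℝ a (a - b) : ℝ) - ‖b‖ ^ (p - 2) * (inner ℝ b (a - b) : ℝ) := by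
  rw [plap_expand (by linarith) a b]
  exact scalar_ge_two hp (norm_nonneg a) (norm_nonneg b) (norm_nonneg _)
    (norm_sub_self_inner a b) (norm_sub_le a b)

/-- The key pointwise inequality for `1 < p < 2`. -/
lemma plap_key_lt_two (hp1 : 1 < p) (hp2 : p < 2) (a b : F) :
    (p-1) * (‖a - b‖ * ‖a - b‖) * ((‖a‖ + ‖b‖) ^ (p-2)) ≤
      ‖a‖ ^ (p - 2) * (inner ℝ a (a - b) : ℝ) - ‖b‖ ^ (p - 2) * (inner ℝ b (a - b) : ℝ) := by
  rw [plap_expand hp1 a b]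
  have habs := abs_real_inner_le_norm a b
  have hcu : (inner ℝ a b : ℝ) ≤ ‖a‖ * ‖b‖ := real_inner_le_norm a b
  have hcl : -(‖a‖ * ‖b‖) ≤ (inner ℝ a b : ℝ) := neg_le_of_abs_le habs
  rcases le_total ‖b‖ ‖a‖ with h | h
  · exact scalar_lt_two_aux hp1 hp2 (norm_nonneg b) h (norm_nonneg _)
      (norm_sub_self_inner a b) hcu hcl
  · have h' := scalar_lt_two_aux hp1 hp2 (norm_nonneg a) h (norm_nonneg (b - a))
      (norm_sub_self_inner b a) (real_inner_le_norm b a)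
      (neg_le_of_abs_le (abs_real_inner_le_norm b a))
    have hcomm : (inner ℝ b a : ℝ) = inner ℝ a b := real_inner_comm a b
    rw [hcomm] at h'
    have e1 : ‖b‖ + ‖a‖ = ‖a‖ + ‖b‖ := by ring
    rw [norm_sub_rev b a, e1] at h'
    linarith [h']
end Pointwise

section MeasureLayer


variable {α : Type*} [MeasurableSpace α] {μ : Measure α}
variable {F : Type*} [NormedAddCommGroup F] [InnerProductSpace ℝ F]
variable {p q : ℝ}

lemma conj_inv_sum (hpq : p.HolderConjugate q) :
    1/(1 : ℝ≥0∞) = 1/ENNReal.ofReal q + 1/ENNReal.ofReal p := by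
  rw [one_div, one_div, one_div, inv_one, add_comm]
  exact (hpq.inv_add_inv_ennreal).symm

lemma pairing_integrable (hpq : p.HolderConjugate q) {f : α → F} {v : α → F}
    (hv : MemLp v (ENNReal.ofReal q) μ) (hf : MemLp f (ENNReal.ofReal p) μ) :
    Integrable (fun x => (inner ℝ (v x) (f x) : ℝ)) μ := by
  rw [← memLp_one_iff_integrable]
  refine ⟨hv.1.inner hf.1, ?_⟩
  calc eLpNorm (fun x => (inner ℝ (v x) (f x) : ℝ)) 1 μ
      ≤ eLpNorm v (ENNReal.ofReal q) μ * eLpNorm f (ENNReal.ofReal p) μ :=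
        by
          haveI : ENNReal.HolderTriple (ENNReal.ofReal q) (ENNReal.ofReal p) 1 :=
            ⟨by simpa [one_div] using (conj_inv_sum hpq).symm⟩
          simpa using eLpNorm_le_eLpNorm_mul_eLpNorm'_of_norm (r := 1) (μ := μ) hv.1 hf.1
            (fun a b => (inner ℝ a b : ℝ)) 1 (Filter.Eventually.of_forall fun x => by
              simpa [Real.norm_eq_abs] using abs_real_inner_le_norm _ _)
    _ < ⊤ := ENNReal.mul_lt_top hv.2 hf.2

lemma pairing_abs_le (hpq : p.HolderConjugate q) {f : α → F} {v : α → F}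
    (hv : MemLp v (ENNReal.ofReal q) μ) (hf : MemLp f (ENNReal.ofReal p) μ) :
    |∫ x, (inner ℝ (v x) (f x) : ℝ) ∂μ| ≤
      (eLpNorm v (ENNReal.ofReal q) μ).toReal * (eLpNorm f (ENNReal.ofReal p) μ).toReal := by
  have h1 : |∫ x, (inner ℝ (v x) (f x) : ℝ) ∂μ| ≤ ∫ x, ‖(inner ℝ (v x) (f x) : ℝ)‖ ∂μ := by
    rw [← Real.norm_eq_abs]
    exact norm_integral_le_integral_norm _
  have h2 : ∫ x, ‖(inner ℝ (v x) (f x) : ℝ)‖ ∂μ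
      = (eLpNorm (fun x => (inner ℝ (v x) (f x) : ℝ)) 1 μ).toReal := by
    rw [eLpNorm_one_eq_lintegral_enorm, integral_norm_eq_lintegral_enorm
      (hv.1.inner hf.1)]
  have h3 : eLpNorm (fun x => (inner ℝ (v x) (f x) : ℝ)) 1 μ
      ≤ eLpNorm v (ENNReal.ofReal q) μ * eLpNorm f (ENNReal.ofReal p) μ :=
    by
      haveI : ENNReal.HolderTriple (ENNReal.ofReal q) (ENNReal.ofReal p) 1 :=
        ⟨by simpa [one_div] using (conj_inv_sum hpq).symm⟩
      simpa using eLpNorm_le_eLpNorm_mul_eLpNorm'_of_norm (r := 1) (μ := μ) hv.1 hf.1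
        (fun a b => (inner ℝ a b : ℝ)) 1 (Filter.Eventually.of_forall fun x => by
          simpa [Real.norm_eq_abs] using abs_real_inner_le_norm _ _)
  have h4 : (eLpNorm (fun x => (inner ℝ (v x) (f x) : ℝ)) 1 μ).toReal
      ≤ (eLpNorm v (ENNReal.ofReal q) μ * eLpNorm f (ENNReal.ofReal p) μ).toReal := by
    apply ENNReal.toReal_mono _ h3
    exact (ENNReal.mul_lt_top hv.2 hf.2).ne
  rw [ENNReal.toReal_mul] at h4
  linarith [h1, h2 ▸ h4]

lemma rpow_helper3m (hp : 1 < p) {s : ℝ} (hs : 0 ≤ s) : s ^ (p - 2) * s = s ^ (p - 1) := by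
  rcases eq_or_lt_of_le hs with h | h
  · rw [← h, mul_zero, Real.zero_rpow (by linarith)]
  · nth_rewrite 2 [← Real.rpow_one s]
    rw [← Real.rpow_add h]; ring_nf

lemma rpow_helper2m (hp : 1 < p) {s : ℝ} (hs : 0 ≤ s) : s ^ (p - 1) * s = s ^ p := by
  rcases eq_or_lt_of_le hs with h | h
  · rw [← h, mul_zero, Real.zero_rpow (by linarith)]
  · nth_rewrite 2 [← Real.rpow_one s]
    rw [← Real.rpow_add h]; ring_nf

lemma conjfun_eLpNorm (hpq : p.HolderConjugate q) {f : α → F} :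
    eLpNorm (fun x => ‖f x‖ ^ (p-2) • f x) (ENNReal.ofReal q) μ
      = (eLpNorm f (ENNReal.ofReal p) μ) ^ (p-1) := by
  have hp1 : 1 < p := hpq.lt
  have hnorm : ∀ x, ‖(‖f x‖ ^ (p-2) • f x)‖ = ‖(fun y => ‖f y‖ ^ (p-1)) x‖ := by
    intro x
    rw [norm_smul, Real.norm_of_nonneg (Real.rpow_nonneg (norm_nonneg _) _),
      rpow_helper3m hp1 (norm_nonneg _),
      Real.norm_of_nonneg (Real.rpow_nonneg (norm_nonneg _) _)]
  rw [eLpNorm_congr_norm_ae (Filter.Eventually.of_forall hnorm)]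
  rw [eLpNorm_norm_rpow f (by linarith : (0:ℝ) < p - 1)]
  have hqe : q * (p - 1) = p := by rw [mul_comm]; exact hpq.sub_one_mul_conj
  rw [← ENNReal.ofReal_mul hpq.symm.nonneg, hqe]

lemma conjfun_memℒp (hpq : p.HolderConjugate q) {f : α → F}
    (hf : MemLp f (ENNReal.ofReal p) μ) :
    MemLp (fun x => ‖f x‖ ^ (p-2) • f x) (ENNReal.ofReal q) μ := by
  refine ⟨((hf.1.norm.aemeasurable.pow_const (p-2)).aestronglyMeasurable).smul hf.1, ?_⟩
  rw [conjfun_eLpNorm hpq]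
  exact ENNReal.rpow_lt_top_of_nonneg (by linarith [hpq.lt]) hf.2.ne

lemma conjfun_inner (hp1 : 1 < p) (f : α → F) (x : α) :
    (inner ℝ (‖f x‖ ^ (p-2) • f x) (f x) : ℝ) = ‖f x‖ ^ p := by
  rw [real_inner_smul_left, real_inner_self_eq_norm_mul_norm]
  rcases eq_or_lt_of_le (norm_nonneg (f x)) with h | h
  · rw [← h, mul_zero, mul_zero, Real.zero_rpow (by linarith)]
  · have h1 : ‖f x‖ * ‖f x‖ = ‖f x‖ ^ (1:ℝ) * ‖f x‖ ^ (1:ℝ) := by rw [Real.rpow_one]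
    rw [h1, ← Real.rpow_add h, ← Real.rpow_add h]
    ring_nf

/-- Banach–Steinhaus: a weakly convergent sequence in `L^p` is norm bounded. -/
lemma weak_bound [CompleteSpace F] (hpq : p.HolderConjugate q)
    {G : ℕ → α → F} (hG : ∀ k, MemLp (G k) (ENNReal.ofReal p) μ)
    (hconv : ∀ v : α → F, MemLp v (ENNReal.ofReal q) μ →
      ∃ L : ℝ, Tendsto (fun k => ∫ x, (inner ℝ (G k x) (v x) : ℝ) ∂μ) atTop (nhds L)) :
    ∃ M : ℝ, 0 ≤ M ∧ ∀ k, (eLpNorm (G k) (ENNReal.ofReal p) μ).toReal ≤ M := by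
  have hp1 : 1 < p := hpq.lt
  haveI : Fact (1 ≤ ENNReal.ofReal q) := ⟨ENNReal.one_le_ofReal.mpr hpq.symm.lt.le⟩
  -- the family of continuous linear functionals on `L^q`
  have hint : ∀ k (f : Lp F (ENNReal.ofReal q) μ),
      Integrable (fun x => (inner ℝ (G k x) ((f : α → F) x) : ℝ)) μ :=
    fun k f => pairing_integrable hpq.symm (hG k) (Lp.memLp f)
  let Φ : ℕ → (Lp F (ENNReal.ofReal q) μ →L[ℝ] ℝ) := fun k =>
    LinearMap.mkContinuous
      { toFun := fun f => ∫ x, (inner ℝ (G k x) ((f : α → F) x) : ℝ) ∂μ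
        map_add' := by
          intro f g
          rw [← integral_add (hint k f) (hint k g)]
          apply integral_congr_ae
          filter_upwards [Lp.coeFn_add f g] with x hx
          rw [hx]
          simp [inner_add_right]
        map_smul' := by
          intro c f
          rw [← integral_smul]
          apply integral_congr_ae
          filter_upwards [Lp.coeFn_smul c f] with x hx
          rw [hx]
          simp [real_inner_smul_right] }
      ((eLpNorm (G k) (ENNReal.ofReal p) μ).toReal)
      (by
        intro f
        simp only [LinearMap.coe_mk, AddHom.coe_mk]
        rw [Real.norm_eq_abs, Lp.norm_def]
        exact pairing_abs_le hpq.symm (hG k) (Lp.memLp f))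
  have hΦapp : ∀ k f, Φ k f = ∫ x, (inner ℝ (G k x) ((f : α → F) x) : ℝ) ∂μ := fun k f => rfl
  have hptw : ∀ f : Lp F (ENNReal.ofReal q) μ, ∃ C, ∀ k, ‖Φ k f‖ ≤ C := by
    intro f
    obtain ⟨L, hL⟩ := hconv (f : α → F) (Lp.memLp f)
    have hL' : Tendsto (fun k => ‖Φ k f‖) atTop (nhds ‖L‖) := by
      simp only [hΦapp]
      exact hL.norm
    obtain ⟨C, hC⟩ := hL'.bddAbove_range
    exact ⟨C, fun k => hC (Set.mem_range_self k)⟩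
  obtain ⟨C', hC'⟩ := banach_steinhaus hptw
  refine ⟨max C' 0, le_max_right _ _, fun k => ?_⟩
  set x := (eLpNorm (G k) (ENNReal.ofReal p) μ).toReal with hx
  have hx0 : 0 ≤ x := ENNReal.toReal_nonneg
  have hvmem : MemLp (fun y => ‖G k y‖ ^ (p-2) • G k y) (ENNReal.ofReal q) μ :=
    conjfun_memℒp hpq (hG k)
  set vL : Lp F (ENNReal.ofReal q) μ := hvmem.toLp _ with hvL
  have hnormv : ‖vL‖ = x ^ (p-1) := by
    rw [hvL, Lp.norm_toLp, conjfun_eLpNorm hpq, ← ENNReal.toReal_rpow]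
  have hA0 : 0 ≤ ∫ y, ‖G k y‖ ^ p ∂μ :=
    integral_nonneg (fun y => Real.rpow_nonneg (norm_nonneg _) _)
  have hΦv : Φ k vL = ∫ y, ‖G k y‖ ^ p ∂μ := by
    rw [hΦapp]
    apply integral_congr_ae
    filter_upwards [hvmem.coeFn_toLp] with y hy
    rw [hy, real_inner_comm, conjfun_inner hp1]
  have hvalx : ∫ y, ‖G k y‖ ^ p ∂μ = x ^ p := by
    have h := (hG k).eLpNorm_eq_integral_rpow_norm
      (by simp [ENNReal.ofReal_eq_zero]; linarith : ENNReal.ofReal p ≠ 0)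
      ENNReal.ofReal_ne_top
    have htr : (ENNReal.ofReal p).toReal = p := ENNReal.toReal_ofReal (by linarith)
    rw [htr] at h
    have hxeq : x = (∫ y, ‖G k y‖ ^ p ∂μ) ^ p⁻¹ := by
      rw [hx, h, ENNReal.toReal_ofReal (Real.rpow_nonneg hA0 _)]
    rw [hxeq, ← Real.rpow_mul hA0, inv_mul_cancel₀ (by linarith : p ≠ 0), Real.rpow_one]
  have hbound : x ^ p ≤ C' * x ^ (p-1) := by
    calc x ^ p = Φ k vL := by rw [hΦv, hvalx]
      _ ≤ ‖Φ k vL‖ := le_abs_self _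
      _ ≤ ‖Φ k‖ * ‖vL‖ := (Φ k).le_opNorm vL
      _ ≤ C' * ‖vL‖ := mul_le_mul_of_nonneg_right (hC' k) (norm_nonneg _)
      _ = C' * x ^ (p-1) := by rw [hnormv]
  rcases eq_or_lt_of_le hx0 with h0 | hxpos
  · rw [← h0]; exact le_max_right _ _
  · have hxp1 : 0 < x ^ (p-1) := Real.rpow_pos_of_pos hxpos _
    have : x ^ (p-1) * x ≤ x ^ (p-1) * C' := by
      rw [rpow_helper2m hp1 hx0]
      calc x ^ p ≤ C' * x ^ (p-1) := hbound
        _ = x ^ (p-1) * C' := by ring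
    have := le_of_mul_le_mul_left this hxp1
    exact le_trans this (le_max_left _ _)



variable {α : Type*} [MeasurableSpace α] {μ : Measure α}
variable {p q : ℝ}

lemma conj_inv_sum' (hpq : p.HolderConjugate q) :
    1/(1 : ℝ≥0∞) = 1/ENNReal.ofReal q + 1/ENNReal.ofReal p := by
  rw [one_div, one_div, one_div, inv_one, add_comm]
  exact (hpq.inv_add_inv_ennreal).symm

/-- product of `L^q` and `L^p` real functions is integrable. -/
lemma mul_integrable (hpq : p.HolderConjugate q) {f v : α → ℝ}
    (hv : MemLp v (ENNReal.ofReal q) μ) (hf : MemLp f (ENNReal.ofReal p) μ) :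
    Integrable (fun x => v x * f x) μ := by
  rw [← memLp_one_iff_integrable]
  refine ⟨hv.1.mul hf.1, ?_⟩
  calc eLpNorm (fun x => v x * f x) 1 μ
      ≤ eLpNorm v (ENNReal.ofReal q) μ * eLpNorm f (ENNReal.ofReal p) μ :=
        by
          haveI : ENNReal.HolderTriple (ENNReal.ofReal q) (ENNReal.ofReal p) 1 :=
            ⟨by simpa [one_div] using (conj_inv_sum' hpq).symm⟩
          simpa using eLpNorm_le_eLpNorm_mul_eLpNorm'_of_norm (r := 1) (μ := μ) hv.1 hf.1
            (fun a b => a * b) 1 (Filter.Eventually.of_forall fun x => by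
              simp [norm_mul])
    _ < ⊤ := ENNReal.mul_lt_top hv.2 hf.2

/-- `∫ ‖f‖^p = (eLpNorm f p μ).toReal ^ p`. -/
lemma integral_norm_rpow_eq {F : Type*} [NormedAddCommGroup F] {f : α → F}
    (hp0 : 0 < p) (hf : MemLp f (ENNReal.ofReal p) μ) :
    ∫ x, ‖f x‖ ^ p ∂μ = ((eLpNorm f (ENNReal.ofReal p) μ).toReal) ^ p := by
  have hA0 : 0 ≤ ∫ y, ‖f y‖ ^ p ∂μ :=
    integral_nonneg (fun y => Real.rpow_nonneg (norm_nonneg _) _)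
  have h := hf.eLpNorm_eq_integral_rpow_norm
    (by simp [ENNReal.ofReal_eq_zero]; linarith : ENNReal.ofReal p ≠ 0)
    ENNReal.ofReal_ne_top
  have htr : (ENNReal.ofReal p).toReal = p := ENNReal.toReal_ofReal hp0.le
  rw [htr] at h
  rw [h, ENNReal.toReal_ofReal (Real.rpow_nonneg hA0 _), ← Real.rpow_mul hA0,
    inv_mul_cancel₀ (by linarith : p ≠ 0), Real.rpow_one]


section MH5
variable {α : Type*} [MeasurableSpace α] {μ : Measure α}
variable {F : Type*} [NormedAddCommGroup F] [InnerProductSpace ℝ F]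
variable {p q : ℝ}

variable {α : Type*} [MeasurableSpace α] {μ : Measure α}
variable {F : Type*} [NormedAddCommGroup F] [InnerProductSpace ℝ F]
variable {p q : ℝ}


lemma holder_step (hpq : p.HolderConjugate q) (hp2 : p < 2) {Gk G₀ : α → F}
    (hGk : MemLp Gk (ENNReal.ofReal p) μ) (hG₀ : MemLp G₀ (ENNReal.ofReal p) μ) :
    ∫ x, ‖Gk x - G₀ x‖ ^ p ∂μ ≤
      ((p-1)⁻¹) ^ (p/2) *
      ((∫ x, (‖Gk x‖ ^ (p-2) * (inner ℝ (Gk x) (Gk x - G₀ x) : ℝ)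
          - ‖G₀ x‖ ^ (p-2) * (inner ℝ (G₀ x) (Gk x - G₀ x) : ℝ)) ∂μ) ^ (p/2)) *
      ((∫ x, (‖Gk x‖ + ‖G₀ x‖) ^ p ∂μ) ^ ((2-p)/2)) := by
  have hp1 : 1 < p := hpq.lt
  have hp0 : (0:ℝ) < p := by linarith
  set fk : α → ℝ := fun x => ‖Gk x‖ ^ (p-2) * (inner ℝ (Gk x) (Gk x - G₀ x) : ℝ)
      - ‖G₀ x‖ ^ (p-2) * (inner ℝ (G₀ x) (Gk x - G₀ x) : ℝ) with hfk
  set σ : α → ℝ := fun x => ‖Gk x‖ + ‖G₀ x‖ with hσ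
  have hfk0 : ∀ x, 0 ≤ fk x := fun x => plap_nonneg hp1 (Gk x) (G₀ x)
  have hσ0 : ∀ x, 0 ≤ σ x := fun x => add_nonneg (norm_nonneg _) (norm_nonneg _)
  have hw : MemLp (fun x => Gk x - G₀ x) (ENNReal.ofReal p) μ := hGk.sub hG₀
  have int1 : Integrable (fun x => ‖Gk x‖ ^ (p-2) * (inner ℝ (Gk x) (Gk x - G₀ x) : ℝ)) μ :=
    (pairing_integrable hpq (conjfun_memℒp hpq hGk) hw).congr
      (Filter.Eventually.of_forall fun x => real_inner_smul_left _ _ _)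
  have int2 : Integrable (fun x => ‖G₀ x‖ ^ (p-2) * (inner ℝ (G₀ x) (Gk x - G₀ x) : ℝ)) μ :=
    (pairing_integrable hpq (conjfun_memℒp hpq hG₀) hw).congr
      (Filter.Eventually.of_forall fun x => real_inner_smul_left _ _ _)
  have hfk_int : Integrable fk μ := int1.sub int2
  -- pointwise inequality
  have hpt : ∀ x, ‖Gk x - G₀ x‖ ^ p ≤
      ((p-1)⁻¹) ^ (p/2) * ((fk x ^ (p/2)) * ((σ x ^ p) ^ ((2-p)/2))) := by
    intro x
    have hprodnn : 0 ≤ (fk x ^ (p/2)) * ((σ x ^ p) ^ ((2-p)/2)) :=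
      mul_nonneg (Real.rpow_nonneg (hfk0 x) _)
        (Real.rpow_nonneg (Real.rpow_nonneg (hσ0 x) _) _)
    have hCnn : (0:ℝ) ≤ ((p-1)⁻¹) ^ (p/2) :=
      Real.rpow_nonneg (inv_nonneg.mpr (by linarith)) _
    rcases eq_or_lt_of_le (hσ0 x) with h0 | hσpos
    · -- σ x = 0, so everything vanishes
      have hGk0 : ‖Gk x‖ = 0 := by
        have h1 := norm_nonneg (Gk x); have h2 := norm_nonneg (G₀ x)
        simp only [hσ] at h0; linarith [h0]
      have hG₀0 : ‖G₀ x‖ = 0 := by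
        have h1 := norm_nonneg (Gk x); have h2 := norm_nonneg (G₀ x)
        simp only [hσ] at h0; linarith [h0]
      have hd0 : ‖Gk x - G₀ x‖ = 0 := by
        have h := norm_sub_le (Gk x) (G₀ x); have := norm_nonneg (Gk x - G₀ x)
        linarith [hGk0, hG₀0]
      rw [hd0, Real.zero_rpow (by linarith : p ≠ 0)]
      exact mul_nonneg hCnn hprodnn
    · -- σ x > 0
      have key := plap_key_lt_two hp1 hp2 (Gk x) (G₀ x)
      have hd0 : (0:ℝ) ≤ ‖Gk x - G₀ x‖ := norm_nonneg _
      have hσinv : σ x ^ (p-2) * σ x ^ (2-p) = 1 := by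
        rw [← Real.rpow_add hσpos]
        norm_num
      have hpinv : (p-1) * (p-1)⁻¹ = 1 := mul_inv_cancel₀ (by linarith)
      have hkey2 : (p - 1) * (‖Gk x - G₀ x‖ * ‖Gk x - G₀ x‖) * (σ x ^ (p-2)) ≤ fk x := key
      have h1 : ‖Gk x - G₀ x‖ * ‖Gk x - G₀ x‖ ≤ (p-1)⁻¹ * fk x * σ x ^ (2-p) := by
        have hc : 0 ≤ (p-1)⁻¹ * σ x ^ (2-p) :=
          mul_nonneg (inv_nonneg.mpr (by linarith)) (Real.rpow_nonneg hσpos.le _)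
        calc ‖Gk x - G₀ x‖ * ‖Gk x - G₀ x‖
            = ((p - 1) * (‖Gk x - G₀ x‖ * ‖Gk x - G₀ x‖) * (σ x ^ (p-2)))
              * ((p-1)⁻¹ * σ x ^ (2-p)) := by
              linear_combination (-(p-1) * (p-1)⁻¹ * (‖Gk x - G₀ x‖ * ‖Gk x - G₀ x‖)) * hσinv
                + (-(‖Gk x - G₀ x‖ * ‖Gk x - G₀ x‖)) * hpinv
          _ ≤ fk x * ((p-1)⁻¹ * σ x ^ (2-p)) := mul_le_mul_of_nonneg_right hkey2 hc
          _ = (p-1)⁻¹ * fk x * σ x ^ (2-p) := by ring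
      have h2 : (‖Gk x - G₀ x‖ * ‖Gk x - G₀ x‖) ^ (p/2)
          ≤ ((p-1)⁻¹ * fk x * σ x ^ (2-p)) ^ (p/2) :=
        Real.rpow_le_rpow (mul_self_nonneg _) h1 (by linarith)
      have hleft : (‖Gk x - G₀ x‖ * ‖Gk x - G₀ x‖) ^ (p/2) = ‖Gk x - G₀ x‖ ^ p := by
        have hsq : ‖Gk x - G₀ x‖ * ‖Gk x - G₀ x‖ = ‖Gk x - G₀ x‖ ^ (2:ℝ) := by
          rw [show (2:ℝ) = ((2:ℕ):ℝ) by norm_num, Real.rpow_natCast]; ring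
        rw [hsq, ← Real.rpow_mul hd0]
        congr 1
        ring
      have hright : ((p-1)⁻¹ * fk x * σ x ^ (2-p)) ^ (p/2)
          = ((p-1)⁻¹) ^ (p/2) * ((fk x ^ (p/2)) * ((σ x ^ p) ^ ((2-p)/2))) := by
        have ha : (0:ℝ) ≤ (p-1)⁻¹ := inv_nonneg.mpr (by linarith)
        have hb : (0:ℝ) ≤ fk x := hfk0 x
        rw [Real.mul_rpow (mul_nonneg ha hb) (Real.rpow_nonneg (hσ0 x) _),
          Real.mul_rpow ha hb]
        have hF2e : (σ x ^ (2-p)) ^ (p/2) = (σ x ^ p) ^ ((2-p)/2) := by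
          rw [← Real.rpow_mul (hσ0 x), ← Real.rpow_mul (hσ0 x)]
          congr 1
          ring
        rw [hF2e]
        ring
      rw [hleft, hright] at h2
      exact h2
  -- conjugate exponents 2/p and 2/(2-p)
  have hconj2 : (2/p).HolderConjugate (2/(2-p)) := by
    rw [Real.holderConjugate_iff]
    constructor
    · exact (one_lt_div hp0).2 hp2
    · rw [inv_div, inv_div]; ring
  -- memberships
  have hmemF1 : MemLp (fun x => fk x ^ (p/2)) (ENNReal.ofReal (2/p)) μ := by
    have h1 : MemLp fk 1 μ := memLp_one_iff_integrable.mpr hfk_int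
    have h2 := h1.norm_rpow_div (ENNReal.ofReal (p/2))
    have he : (1 : ℝ≥0∞) / ENNReal.ofReal (p/2) = ENNReal.ofReal (2/p) := by
      rw [one_div, ← ENNReal.ofReal_inv_of_pos (by linarith), inv_div]
    have ht : (ENNReal.ofReal (p/2)).toReal = p/2 := ENNReal.toReal_ofReal (by linarith)
    rw [he, ht] at h2
    exact h2.ae_eq (Filter.Eventually.of_forall fun x => by
      rw [Real.norm_of_nonneg (hfk0 x)])
  have hmemσ : MemLp σ (ENNReal.ofReal p) μ := hGk.norm.add hG₀.norm
  have hmemF2 : MemLp (fun x => (σ x ^ p) ^ ((2-p)/2)) (ENNReal.ofReal (2/(2-p))) μ := by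
    have h2 := hmemσ.norm_rpow_div (ENNReal.ofReal (p*(2-p)/2))
    have hpos : (0:ℝ) < p*(2-p)/2 := by nlinarith
    have he : ENNReal.ofReal p / ENNReal.ofReal (p*(2-p)/2) = ENNReal.ofReal (2/(2-p)) := by
      rw [← ENNReal.ofReal_div_of_pos hpos]
      congr 1
      rw [div_eq_div_iff (by nlinarith : p*(2-p)/2 ≠ 0) (by intro h; linarith [h] : (2:ℝ)-p ≠ 0)]
      ring
    have ht : (ENNReal.ofReal (p*(2-p)/2)).toReal = p*(2-p)/2 := ENNReal.toReal_ofReal hpos.le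
    rw [he, ht] at h2
    refine h2.ae_eq (Filter.Eventually.of_forall fun x => ?_)
    show ‖σ x‖ ^ (p*(2-p)/2) = (σ x ^ p) ^ ((2-p)/2)
    rw [Real.norm_of_nonneg (hσ0 x), ← Real.rpow_mul (hσ0 x)]
    congr 1
    ring
  -- Hölder
  have hH := integral_mul_le_Lp_mul_Lq_of_nonneg hconj2
    (Filter.Eventually.of_forall fun x => Real.rpow_nonneg (hfk0 x) (p/2))
    (Filter.Eventually.of_forall fun x => Real.rpow_nonneg (Real.rpow_nonneg (hσ0 x) _) _)
    hmemF1 hmemF2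
  have hE1 : ∫ x, (fk x ^ (p/2)) ^ (2/p) ∂μ = ∫ x, fk x ∂μ := by
    apply integral_congr_ae
    apply Filter.Eventually.of_forall
    intro x
    show (fk x ^ (p/2)) ^ (2/p) = fk x
    rw [← Real.rpow_mul (hfk0 x), show (p/2) * (2/p) = 1 by field_simp, Real.rpow_one]
  have hE2 : ∫ x, ((σ x ^ p) ^ ((2-p)/2)) ^ (2/(2-p)) ∂μ = ∫ x, σ x ^ p ∂μ := by
    apply integral_congr_ae
    apply Filter.Eventually.of_forall
    intro x
    show ((σ x ^ p) ^ ((2-p)/2)) ^ (2/(2-p)) = σ x ^ p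
    rw [← Real.rpow_mul (Real.rpow_nonneg (hσ0 x) _),
      show ((2-p)/2) * (2/(2-p)) = 1 by rw [div_mul_div_comm]; rw [div_eq_one_iff_eq (by nlinarith : (2:ℝ)*(2-p) ≠ 0)]; ring,
      Real.rpow_one]
  rw [hE1, hE2, one_div_div, one_div_div] at hH
  -- integrate the pointwise inequality
  have hC0 : (0:ℝ) ≤ ((p-1)⁻¹) ^ (p/2) :=
    Real.rpow_nonneg (inv_nonneg.mpr (by linarith)) _
  have hlhs_int : Integrable (fun x => ‖Gk x - G₀ x‖ ^ p) μ := by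
    have := hw.integrable_norm_rpow
      (by simp [ENNReal.ofReal_eq_zero]; linarith : ENNReal.ofReal p ≠ 0)
      ENNReal.ofReal_ne_top
    rwa [ENNReal.toReal_ofReal hp0.le] at this
  have hF12_int : Integrable (fun x => (fk x ^ (p/2)) * ((σ x ^ p) ^ ((2-p)/2))) μ := by
    have := mul_integrable hconj2 hmemF2 hmemF1
    exact this.congr (Filter.Eventually.of_forall fun x => by ring)
  have step : ∫ x, ‖Gk x - G₀ x‖ ^ p ∂μ
      ≤ ((p-1)⁻¹) ^ (p/2) * ∫ x, (fk x ^ (p/2)) * ((σ x ^ p) ^ ((2-p)/2)) ∂μ := by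
    rw [← integral_const_mul]
    exact integral_mono hlhs_int (hF12_int.const_mul _) hpt
  calc ∫ x, ‖Gk x - G₀ x‖ ^ p ∂μ
      ≤ ((p-1)⁻¹) ^ (p/2) * ∫ x, (fk x ^ (p/2)) * ((σ x ^ p) ^ ((2-p)/2)) ∂μ := step
    _ ≤ ((p-1)⁻¹) ^ (p/2) * ((∫ x, fk x ∂μ) ^ (p/2) * (∫ x, σ x ^ p ∂μ) ^ ((2-p)/2)) :=
        mul_le_mul_of_nonneg_left hH hC0
    _ = _ := by rw [hfk, hσ]; ring

end MH5
end MeasureLayer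

/-- The `(S₊)`-property of `-Δ_p` on `W₀^{1,p}(Ω)`: if `u_k ⇀ u` weakly in `W₀^{1,p}(Ω)` and
`limsup_k ⟨-Δ_p u_k, u_k - u⟩ ≤ 0`, then `u_k → u` strongly in `W₀^{1,p}(Ω)`. -/
theorem stmt_10 (p : ℝ) (hp1 : 1 < p)
    (Ω : Set (EuclideanSpace ℝ (Fin N))) (hΩo : IsOpen Ω) (hΩb : Bornology.IsBounded Ω)
    (u : ℕ → EuclideanSpace ℝ (Fin N) → ℝ)
    (G : ℕ → EuclideanSpace ℝ (Fin N) → EuclideanSpace ℝ (Fin N))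
    (u₀ : EuclideanSpace ℝ (Fin N) → ℝ)
    (G₀ : EuclideanSpace ℝ (Fin N) → EuclideanSpace ℝ (Fin N))
    (hW : ∀ k, MemW01p p Ω (u k) (G k)) (hW₀ : MemW01p p Ω u₀ G₀)
    -- weak convergence `u_k ⇀ u` in `W₀^{1,p}(Ω)`, tested on the dual `L^{p'}`:
    (hweakG : ∀ v : EuclideanSpace ℝ (Fin N) → EuclideanSpace ℝ (Fin N),
      MemLp v (ENNReal.ofReal (p / (p - 1))) (volume.restrict Ω) →
      Tendsto (fun k => ∫ x in Ω, (inner ℝ (G k x) (v x) : ℝ)) atTop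
        (nhds (∫ x in Ω, (inner ℝ (G₀ x) (v x) : ℝ))))
    (hweaku : ∀ w : EuclideanSpace ℝ (Fin N) → ℝ,
      MemLp w (ENNReal.ofReal (p / (p - 1))) (volume.restrict Ω) →
      Tendsto (fun k => ∫ x in Ω, u k x * w x) atTop (nhds (∫ x in Ω, u₀ x * w x)))
    -- `limsup_k ⟨-Δ_p u_k, u_k - u⟩ ≤ 0`:
    (hS : limsup (fun k => ∫ x in Ω,
        ‖G k x‖ ^ (p - 2) * (inner ℝ (G k x) (G k x - G₀ x) : ℝ)) atTop ≤ 0) :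
    Tendsto (fun k => eLpNorm (fun x => G k x - G₀ x) (ENNReal.ofReal p) (volume.restrict Ω))
      atTop (nhds 0) := by
  classical
  have hp0 : (0:ℝ) < p := by linarith
  have hpq : p.HolderConjugate (p / (p-1)) :=
    (Real.holderConjugate_iff_eq_conjExponent hp1).mpr rfl
  have hpne0 : ENNReal.ofReal p ≠ 0 := by simp [ENNReal.ofReal_eq_zero]; linarith
  have hG : ∀ k, MemLp (G k) (ENNReal.ofReal p) (volume.restrict Ω) := fun k => (hW k).2.1
  have hG₀m : MemLp G₀ (ENNReal.ofReal p) (volume.restrict Ω) := hW₀.2.1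
  have hwmem : ∀ k, MemLp (fun x => G k x - G₀ x) (ENNReal.ofReal p) (volume.restrict Ω) :=
    fun k => (hG k).sub hG₀m
  -- the conjugate function of `G₀`
  have hv₀mem : MemLp (fun x => ‖G₀ x‖ ^ (p-2) • G₀ x)
      (ENNReal.ofReal (p/(p-1))) (volume.restrict Ω) := conjfun_memℒp hpq hG₀m
  -- integrability of the two pieces of the monotonicity integrand
  have hint1 : ∀ k, Integrable
      (fun x => ‖G k x‖ ^ (p - 2) * (inner ℝ (G k x) (G k x - G₀ x) : ℝ))
      (volume.restrict Ω) := fun k =>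
    (pairing_integrable hpq (conjfun_memℒp hpq (hG k)) (hwmem k)).congr
      (Filter.Eventually.of_forall fun x => real_inner_smul_left _ _ _)
  have hint2 : ∀ k, Integrable
      (fun x => ‖G₀ x‖ ^ (p - 2) * (inner ℝ (G₀ x) (G k x - G₀ x) : ℝ))
      (volume.restrict Ω) := fun k =>
    (pairing_integrable hpq hv₀mem (hwmem k)).congr
      (Filter.Eventually.of_forall fun x => real_inner_smul_left _ _ _)
  -- D k = I k - J k
  have hDip : ∀ k, ∫ x in Ω,
      (‖G k x‖ ^ (p - 2) * (inner ℝ (G k x) (G k x - G₀ x) : ℝ)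
        - ‖G₀ x‖ ^ (p - 2) * (inner ℝ (G₀ x) (G k x - G₀ x) : ℝ))
      = (∫ x in Ω, ‖G k x‖ ^ (p - 2) * (inner ℝ (G k x) (G k x - G₀ x) : ℝ))
        - ∫ x in Ω, ‖G₀ x‖ ^ (p - 2) * (inner ℝ (G₀ x) (G k x - G₀ x) : ℝ) :=
    fun k => integral_sub (hint1 k) (hint2 k)
  -- J k → 0 by weak convergence against the conjugate function of G₀
  have hJtends : Tendsto
      (fun k => ∫ x in Ω, ‖G₀ x‖ ^ (p - 2) * (inner ℝ (G₀ x) (G k x - G₀ x) : ℝ))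
      atTop (nhds 0) := by
    have hsplit : ∀ k, ∫ x in Ω, ‖G₀ x‖ ^ (p - 2) * (inner ℝ (G₀ x) (G k x - G₀ x) : ℝ)
        = (∫ x in Ω, (inner ℝ (G k x) ((fun y => ‖G₀ y‖ ^ (p-2) • G₀ y) x) : ℝ))
          - ∫ x in Ω, (inner ℝ (G₀ x) ((fun y => ‖G₀ y‖ ^ (p-2) • G₀ y) x) : ℝ) := by
      intro k
      rw [← integral_sub (pairing_integrable hpq.symm (hG k) hv₀mem)
        (pairing_integrable hpq.symm hG₀m hv₀mem)]
      apply integral_congr_ae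
      apply Filter.Eventually.of_forall
      intro x
      show ‖G₀ x‖ ^ (p - 2) * (inner ℝ (G₀ x) (G k x - G₀ x) : ℝ)
        = (inner ℝ (G k x) (‖G₀ x‖ ^ (p-2) • G₀ x) : ℝ)
          - (inner ℝ (G₀ x) (‖G₀ x‖ ^ (p-2) • G₀ x) : ℝ)
      rw [real_inner_smul_right, real_inner_smul_right, inner_sub_right,
        real_inner_comm (G₀ x) (G k x)]
      ring
    have h2 := (hweakG (fun y => ‖G₀ y‖ ^ (p-2) • G₀ y) hv₀mem).sub_const
      (∫ x in Ω, (inner ℝ (G₀ x) ((fun y => ‖G₀ y‖ ^ (p-2) • G₀ y) x) : ℝ))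
    rw [sub_self] at h2
    exact h2.congr fun k => (hsplit k).symm
  -- nonnegativity of D
  have hD0 : ∀ k, 0 ≤ ∫ x in Ω,
      (‖G k x‖ ^ (p - 2) * (inner ℝ (G k x) (G k x - G₀ x) : ℝ)
        - ‖G₀ x‖ ^ (p - 2) * (inner ℝ (G₀ x) (G k x - G₀ x) : ℝ)) :=
    fun k => integral_nonneg fun x => plap_nonneg hp1 (G k x) (G₀ x)
  -- the norms of G k are bounded (Banach–Steinhaus)
  obtain ⟨M, hM0, hM⟩ := weak_bound hpq hG (fun v hv => ⟨_, hweakG v hv⟩)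
  -- upper bound on I k
  have hIub : ∀ k, (∫ x in Ω, ‖G k x‖ ^ (p - 2) * (inner ℝ (G k x) (G k x - G₀ x) : ℝ))
      ≤ M ^ (p-1) * (M + (eLpNorm G₀ (ENNReal.ofReal p) (volume.restrict Ω)).toReal) := by
    intro k
    have h1 : (∫ x in Ω, ‖G k x‖ ^ (p - 2) * (inner ℝ (G k x) (G k x - G₀ x) : ℝ))
        = ∫ x in Ω, (inner ℝ ((fun y => ‖G k y‖ ^ (p-2) • G k y) x) (G k x - G₀ x) : ℝ) :=
      integral_congr_ae (Filter.Eventually.of_forall fun x =>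
        (real_inner_smul_left _ _ _).symm)
    have h2 := pairing_abs_le hpq (conjfun_memℒp hpq (hG k)) (hwmem k)
    have h3 : (eLpNorm (fun y => ‖G k y‖ ^ (p-2) • G k y)
          (ENNReal.ofReal (p/(p-1))) (volume.restrict Ω)).toReal
        = ((eLpNorm (G k) (ENNReal.ofReal p) (volume.restrict Ω)).toReal) ^ (p-1) := by
      rw [conjfun_eLpNorm hpq, ← ENNReal.toReal_rpow]
    have h4 : ((eLpNorm (G k) (ENNReal.ofReal p) (volume.restrict Ω)).toReal) ^ (p-1)
        ≤ M ^ (p-1) :=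
      Real.rpow_le_rpow ENNReal.toReal_nonneg (hM k) (by linarith)
    have h5 : (eLpNorm (fun x => G k x - G₀ x) (ENNReal.ofReal p) (volume.restrict Ω)).toReal
        ≤ M + (eLpNorm G₀ (ENNReal.ofReal p) (volume.restrict Ω)).toReal := by
      have h5a : eLpNorm (fun x => G k x - G₀ x) (ENNReal.ofReal p) (volume.restrict Ω)
          ≤ eLpNorm (G k) (ENNReal.ofReal p) (volume.restrict Ω)
            + eLpNorm G₀ (ENNReal.ofReal p) (volume.restrict Ω) :=
        eLpNorm_sub_le (hG k).1 hG₀m.1 (ENNReal.one_le_ofReal.mpr hp1.le)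
      have h5b := ENNReal.toReal_mono
        (ENNReal.add_ne_top.mpr ⟨(hG k).2.ne, hG₀m.2.ne⟩) h5a
      rw [ENNReal.toReal_add (hG k).2.ne hG₀m.2.ne] at h5b
      linarith [hM k]
    have h6 : 0 ≤ ((eLpNorm (G k) (ENNReal.ofReal p) (volume.restrict Ω)).toReal) ^ (p-1) :=
      Real.rpow_nonneg ENNReal.toReal_nonneg _
    calc (∫ x in Ω, ‖G k x‖ ^ (p - 2) * (inner ℝ (G k x) (G k x - G₀ x) : ℝ))
        ≤ |∫ x in Ω, (inner ℝ ((fun y => ‖G k y‖ ^ (p-2) • G k y) x) (G k x - G₀ x) : ℝ)| := by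
          rw [h1]; exact le_abs_self _
      _ ≤ (eLpNorm (fun y => ‖G k y‖ ^ (p-2) • G k y)
            (ENNReal.ofReal (p/(p-1))) (volume.restrict Ω)).toReal
          * (eLpNorm (fun x => G k x - G₀ x) (ENNReal.ofReal p) (volume.restrict Ω)).toReal := h2
      _ ≤ M ^ (p-1) * (M + (eLpNorm G₀ (ENNReal.ofReal p) (volume.restrict Ω)).toReal) := by
          rw [h3]
          apply mul_le_mul h4 h5 ENNReal.toReal_nonneg (Real.rpow_nonneg hM0 _)
  -- max (I k) 0 → 0
  have hIbd : IsBoundedUnder (· ≤ ·) atTop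
      (fun k => ∫ x in Ω, ‖G k x‖ ^ (p - 2) * (inner ℝ (G k x) (G k x - G₀ x) : ℝ)) :=
    isBoundedUnder_of ⟨_, hIub⟩
  have hImax : Tendsto
      (fun k => max (∫ x in Ω, ‖G k x‖ ^ (p - 2) * (inner ℝ (G k x) (G k x - G₀ x) : ℝ)) 0)
      atTop (nhds 0) := by
    apply tendsto_order.2
    constructor
    · intro a ha
      exact Filter.Eventually.of_forall fun k => lt_of_lt_of_le ha (le_max_right _ _)
    · intro a ha
      have h := eventually_lt_of_limsup_lt (lt_of_le_of_lt hS ha) hIbd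
      filter_upwards [h] with k hk
      exact max_lt hk ha
  -- D → 0
  have hDtends : Tendsto (fun k => ∫ x in Ω,
      (‖G k x‖ ^ (p - 2) * (inner ℝ (G k x) (G k x - G₀ x) : ℝ)
        - ‖G₀ x‖ ^ (p - 2) * (inner ℝ (G₀ x) (G k x - G₀ x) : ℝ)))
      atTop (nhds 0) := by
    have habs : Tendsto
        (fun k => |∫ x in Ω, ‖G₀ x‖ ^ (p - 2) * (inner ℝ (G₀ x) (G k x - G₀ x) : ℝ)|)
        atTop (nhds 0) := by
      have := hJtends.abs
      simpa using this
    have hupper : Tendsto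
        (fun k => max (∫ x in Ω, ‖G k x‖ ^ (p - 2) * (inner ℝ (G k x) (G k x - G₀ x) : ℝ)) 0
          + |∫ x in Ω, ‖G₀ x‖ ^ (p - 2) * (inner ℝ (G₀ x) (G k x - G₀ x) : ℝ)|)
        atTop (nhds 0) := by
      have := hImax.add habs
      simpa using this
    apply tendsto_of_tendsto_of_tendsto_of_le_of_le tendsto_const_nhds hupper hD0
    intro k
    dsimp only
    rw [hDip k]
    have h1 := le_max_left (∫ x in Ω, ‖G k x‖ ^ (p - 2) * (inner ℝ (G k x) (G k x - G₀ x) : ℝ)) 0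
    have h2 := neg_abs_le (∫ x in Ω, ‖G₀ x‖ ^ (p - 2) * (inner ℝ (G₀ x) (G k x - G₀ x) : ℝ))
    linarith
  -- it suffices to show the p-th power integrals tend to zero
  have hy0 : ∀ k, 0 ≤ ∫ x in Ω, ‖G k x - G₀ x‖ ^ p :=
    fun k => integral_nonneg fun x => Real.rpow_nonneg (norm_nonneg _) _
  suffices hy : Tendsto (fun k => ∫ x in Ω, ‖G k x - G₀ x‖ ^ p) atTop (nhds 0) by
    have hfinal : ∀ k, eLpNorm (fun x => G k x - G₀ x) (ENNReal.ofReal p) (volume.restrict Ω)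
        = ENNReal.ofReal ((∫ x in Ω, ‖G k x - G₀ x‖ ^ p) ^ p⁻¹) := by
      intro k
      have h := (hwmem k).eLpNorm_eq_integral_rpow_norm hpne0 ENNReal.ofReal_ne_top
      rw [ENNReal.toReal_ofReal hp0.le] at h
      exact h
    have h1 : Tendsto (fun k => (∫ x in Ω, ‖G k x - G₀ x‖ ^ p) ^ p⁻¹) atTop (nhds 0) := by
      have hc := (Real.continuousAt_rpow_const 0 p⁻¹ (Or.inr (by positivity))).tendsto
      have := hc.comp hy
      simpa [Real.zero_rpow (by positivity : p⁻¹ ≠ 0), Function.comp_def] using this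
    have h2 : Tendsto (fun k => ENNReal.ofReal ((∫ x in Ω, ‖G k x - G₀ x‖ ^ p) ^ p⁻¹))
        atTop (nhds 0) := by
      have := (ENNReal.continuous_ofReal.tendsto 0).comp h1
      simpa [Function.comp_def] using this
    exact h2.congr fun k => (hfinal k).symm
  -- two cases depending on p
  have hnormint : ∀ k, Integrable (fun x => ‖G k x - G₀ x‖ ^ p) (volume.restrict Ω) := by
    intro k
    have := (hwmem k).integrable_norm_rpow hpne0 ENNReal.ofReal_ne_top
    rwa [ENNReal.toReal_ofReal hp0.le] at this
  rcases le_or_gt 2 p with hp2 | hp2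
  · -- p ≥ 2
    have hkey : ∀ k, (2:ℝ) ^ (1-p) * ∫ x in Ω, ‖G k x - G₀ x‖ ^ p
        ≤ ∫ x in Ω, (‖G k x‖ ^ (p - 2) * (inner ℝ (G k x) (G k x - G₀ x) : ℝ)
          - ‖G₀ x‖ ^ (p - 2) * (inner ℝ (G₀ x) (G k x - G₀ x) : ℝ)) := by
      intro k
      rw [← integral_const_mul]
      exact integral_mono ((hnormint k).const_mul _) ((hint1 k).sub (hint2 k))
        (fun x => plap_key_ge_two hp2 (G k x) (G₀ x))
    have h2p : (2:ℝ) ^ (p-1) * (2:ℝ) ^ (1-p) = 1 := by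
      rw [← Real.rpow_add (by norm_num : (0:ℝ) < 2), show (p-1) + (1-p) = 0 by ring,
        Real.rpow_zero]
    have hupperle : ∀ k, ∫ x in Ω, ‖G k x - G₀ x‖ ^ p
        ≤ (2:ℝ) ^ (p-1) * ∫ x in Ω, (‖G k x‖ ^ (p - 2) * (inner ℝ (G k x) (G k x - G₀ x) : ℝ)
          - ‖G₀ x‖ ^ (p - 2) * (inner ℝ (G₀ x) (G k x - G₀ x) : ℝ)) := by
      intro k
      calc ∫ x in Ω, ‖G k x - G₀ x‖ ^ p
          = (2:ℝ) ^ (p-1) * ((2:ℝ) ^ (1-p) * ∫ x in Ω, ‖G k x - G₀ x‖ ^ p) := by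
            rw [← mul_assoc, h2p, one_mul]
        _ ≤ (2:ℝ) ^ (p-1) * ∫ x in Ω,
              (‖G k x‖ ^ (p - 2) * (inner ℝ (G k x) (G k x - G₀ x) : ℝ)
                - ‖G₀ x‖ ^ (p - 2) * (inner ℝ (G₀ x) (G k x - G₀ x) : ℝ)) :=
            mul_le_mul_of_nonneg_left (hkey k) (Real.rpow_nonneg (by norm_num) _)
    have hub : Tendsto (fun k => (2:ℝ) ^ (p-1) * ∫ x in Ω,
        (‖G k x‖ ^ (p - 2) * (inner ℝ (G k x) (G k x - G₀ x) : ℝ)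
          - ‖G₀ x‖ ^ (p - 2) * (inner ℝ (G₀ x) (G k x - G₀ x) : ℝ))) atTop (nhds 0) := by
      have := hDtends.const_mul ((2:ℝ) ^ (p-1))
      simpa using this
    exact tendsto_of_tendsto_of_tendsto_of_le_of_le tendsto_const_nhds hub hy0 hupperle
  · -- 1 < p < 2
    have hhs := fun k => holder_step (μ := volume.restrict Ω) hpq hp2 (hG k) hG₀m
    -- bound on ∫ (‖G k‖ + ‖G₀‖)^p
    have hptt : ∀ s t : ℝ, 0 ≤ s → 0 ≤ t → (s+t) ^ p ≤ 2 ^ p * (s ^ p + t ^ p) := by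
      intro s t hs ht
      have h1 : (s + t) ^ p ≤ (2 * max s t) ^ p := by
        apply Real.rpow_le_rpow (by linarith) _ hp0.le
        rcases le_total s t with h | h
        · rw [max_eq_right h]; linarith
        · rw [max_eq_left h]; linarith
      have h2 : (2 * max s t) ^ p = 2 ^ p * (max s t) ^ p :=
        Real.mul_rpow (by norm_num) (le_max_of_le_left hs)
      have h3 : (max s t) ^ p ≤ s ^ p + t ^ p := by
        rcases le_total s t with h | h
        · rw [max_eq_right h]; have : (0:ℝ) ≤ s ^ p := Real.rpow_nonneg hs _; linarith
        · rw [max_eq_left h]; have : (0:ℝ) ≤ t ^ p := Real.rpow_nonneg ht _; linarith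
      calc (s + t) ^ p ≤ 2 ^ p * (max s t) ^ p := by rw [← h2]; exact h1
        _ ≤ 2 ^ p * (s ^ p + t ^ p) :=
            mul_le_mul_of_nonneg_left h3 (Real.rpow_nonneg (by norm_num) _)
    have hG₀int : Integrable (fun x => ‖G₀ x‖ ^ p) (volume.restrict Ω) := by
      have := hG₀m.integrable_norm_rpow hpne0 ENNReal.ofReal_ne_top
      rwa [ENNReal.toReal_ofReal hp0.le] at this
    have hGkint : ∀ k, Integrable (fun x => ‖G k x‖ ^ p) (volume.restrict Ω) := by
      intro k
      have := (hG k).integrable_norm_rpow hpne0 ENNReal.ofReal_ne_top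
      rwa [ENNReal.toReal_ofReal hp0.le] at this
    have hσint : ∀ k, Integrable (fun x => (‖G k x‖ + ‖G₀ x‖) ^ p) (volume.restrict Ω) := by
      intro k
      have hm : MemLp (fun x => ‖G k x‖ + ‖G₀ x‖) (ENNReal.ofReal p) (volume.restrict Ω) :=
        (hG k).norm.add hG₀m.norm
      have := hm.integrable_norm_rpow hpne0 ENNReal.ofReal_ne_top
      rw [ENNReal.toReal_ofReal hp0.le] at this
      exact this.congr (Filter.Eventually.of_forall fun x => by
        show ‖‖G k x‖ + ‖G₀ x‖‖ ^ p = (‖G k x‖ + ‖G₀ x‖) ^ p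
        rw [Real.norm_of_nonneg (add_nonneg (norm_nonneg _) (norm_nonneg _))])
    have hσbound : ∀ k, ∫ x in Ω, (‖G k x‖ + ‖G₀ x‖) ^ p
        ≤ 2 ^ p * (M ^ p + ∫ x in Ω, ‖G₀ x‖ ^ p) := by
      intro k
      have hstep : ∫ x in Ω, (‖G k x‖ + ‖G₀ x‖) ^ p
          ≤ ∫ x in Ω, 2 ^ p * (‖G k x‖ ^ p + ‖G₀ x‖ ^ p) := by
        apply integral_mono (hσint k) (((hGkint k).add hG₀int).const_mul _)
        intro x
        exact hptt _ _ (norm_nonneg _) (norm_nonneg _)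
      have heq : ∫ x in Ω, 2 ^ p * (‖G k x‖ ^ p + ‖G₀ x‖ ^ p)
          = 2 ^ p * ((∫ x in Ω, ‖G k x‖ ^ p) + ∫ x in Ω, ‖G₀ x‖ ^ p) := by
        rw [integral_const_mul, integral_add (hGkint k) hG₀int]
      have hGkb : ∫ x in Ω, ‖G k x‖ ^ p ≤ M ^ p := by
        rw [integral_norm_rpow_eq hp0 (hG k)]
        exact Real.rpow_le_rpow ENNReal.toReal_nonneg (hM k) hp0.le
      rw [heq] at hstep
      have h2pn : (0:ℝ) ≤ 2 ^ p := Real.rpow_nonneg (by norm_num) _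
      nlinarith [hstep, hGkb, h2pn]
    -- combine
    set K : ℝ := 2 ^ p * (M ^ p + ∫ x in Ω, ‖G₀ x‖ ^ p) with hK
    have hK0 : 0 ≤ K := by
      have h1 : 0 ≤ ∫ x in Ω, ‖G₀ x‖ ^ p :=
        integral_nonneg fun x => Real.rpow_nonneg (norm_nonneg _) _
      have h2 : (0:ℝ) ≤ M ^ p := Real.rpow_nonneg hM0 _
      have h3 : (0:ℝ) ≤ 2 ^ p := Real.rpow_nonneg (by norm_num) _
      rw [hK]; positivity
    have hupperle : ∀ k, ∫ x in Ω, ‖G k x - G₀ x‖ ^ p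
        ≤ ((p-1)⁻¹) ^ (p/2) * K ^ ((2-p)/2)
          * ((∫ x in Ω, (‖G k x‖ ^ (p - 2) * (inner ℝ (G k x) (G k x - G₀ x) : ℝ)
            - ‖G₀ x‖ ^ (p - 2) * (inner ℝ (G₀ x) (G k x - G₀ x) : ℝ))) ^ (p/2)) := by
      intro k
      have hC0 : (0:ℝ) ≤ ((p-1)⁻¹) ^ (p/2) :=
        Real.rpow_nonneg (inv_nonneg.mpr (by linarith)) _
      have hD2 : (0:ℝ) ≤ (∫ x in Ω, (‖G k x‖ ^ (p - 2) * (inner ℝ (G k x) (G k x - G₀ x) : ℝ)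
          - ‖G₀ x‖ ^ (p - 2) * (inner ℝ (G₀ x) (G k x - G₀ x) : ℝ))) ^ (p/2) :=
        Real.rpow_nonneg (hD0 k) _
      have hfac : (∫ x in Ω, (‖G k x‖ + ‖G₀ x‖) ^ p) ^ ((2-p)/2) ≤ K ^ ((2-p)/2) :=
        Real.rpow_le_rpow (integral_nonneg fun x =>
          Real.rpow_nonneg (add_nonneg (norm_nonneg _) (norm_nonneg _)) _)
          (hσbound k) (by linarith)
      calc ∫ x in Ω, ‖G k x - G₀ x‖ ^ p
          ≤ ((p-1)⁻¹) ^ (p/2)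
            * ((∫ x in Ω, (‖G k x‖ ^ (p - 2) * (inner ℝ (G k x) (G k x - G₀ x) : ℝ)
              - ‖G₀ x‖ ^ (p - 2) * (inner ℝ (G₀ x) (G k x - G₀ x) : ℝ))) ^ (p/2))
            * ((∫ x in Ω, (‖G k x‖ + ‖G₀ x‖) ^ p) ^ ((2-p)/2)) := hhs k
        _ ≤ ((p-1)⁻¹) ^ (p/2)
            * ((∫ x in Ω, (‖G k x‖ ^ (p - 2) * (inner ℝ (G k x) (G k x - G₀ x) : ℝ)
              - ‖G₀ x‖ ^ (p - 2) * (inner ℝ (G₀ x) (G k x - G₀ x) : ℝ))) ^ (p/2))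
            * K ^ ((2-p)/2) :=
            mul_le_mul_of_nonneg_left hfac (mul_nonneg hC0 hD2)
        _ = ((p-1)⁻¹) ^ (p/2) * K ^ ((2-p)/2)
            * ((∫ x in Ω, (‖G k x‖ ^ (p - 2) * (inner ℝ (G k x) (G k x - G₀ x) : ℝ)
              - ‖G₀ x‖ ^ (p - 2) * (inner ℝ (G₀ x) (G k x - G₀ x) : ℝ))) ^ (p/2)) := by ring
    have hDhalf : Tendsto (fun k => (∫ x in Ω,
        (‖G k x‖ ^ (p - 2) * (inner ℝ (G k x) (G k x - G₀ x) : ℝ)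
          - ‖G₀ x‖ ^ (p - 2) * (inner ℝ (G₀ x) (G k x - G₀ x) : ℝ))) ^ (p/2))
        atTop (nhds 0) := by
      have hc := (Real.continuousAt_rpow_const 0 (p/2) (Or.inr (by positivity))).tendsto
      have := hc.comp hDtends
      simpa [Real.zero_rpow (by positivity : p/2 ≠ 0), Function.comp_def] using this
    have hub : Tendsto (fun k => ((p-1)⁻¹) ^ (p/2) * K ^ ((2-p)/2)
        * ((∫ x in Ω, (‖G k x‖ ^ (p - 2) * (inner ℝ (G k x) (G k x - G₀ x) : ℝ)
          - ‖G₀ x‖ ^ (p - 2) * (inner ℝ (G₀ x) (G k x - G₀ x) : ℝ))) ^ (p/2)))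
        atTop (nhds 0) := by
      have := hDhalf.const_mul (((p-1)⁻¹) ^ (p/2) * K ^ ((2-p)/2))
      simpa [mul_assoc] using this
    exact tendsto_of_tendsto_of_tendsto_of_le_of_le tendsto_const_nhds hub hy0 hupperle
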